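/- In a finitely injective K-bilinear space V, for any finite linearly independent vectors a₁, …, aₙ, a_{n+1} and any prescribed values λ₁, …, λ_{n+1} ∈ K, there exists b ∈ V with [b, a_i] = λ_i for all i ≤ n+1. In particular, no nonzero vector is orthogonal to all of V. -/

import Mathlib

universe u

/-- A bilinear space `(V, BV)` is finitely injective if every bilinear monomorphism from a
finite dimensional bilinear space `A` into `V` extends along any bilinear monomorphism
from `A` into a finite dimensional bilinear space `B`. -/
def FinitelyInjective (K : Type u) [Field K] (V : Type u) [AddCommGroup V] [Module K V]
    (BV : V →ₗ[K] V →ₗ[K] K) : Prop :=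
  ∀ (A B : Type u) [AddCommGroup A] [Module K A] [AddCommGroup B] [Module K B],
    ∀ (BA : A →ₗ[K] A →ₗ[K] K) (BB : B →ₗ[K] B →ₗ[K] K),
    FiniteDimensional K A → FiniteDimensional K B →
    ∀ ι : A →ₗ[K] B, Function.Injective ι → (∀ x y : A, BB (ι x) (ι y) = BA x y) →
    ∀ f : A →ₗ[K] V, Function.Injective f → (∀ x y : A, BV (f x) (f y) = BA x y) →
    ∃ g : B →ₗ[K] V, Function.Injective g ∧ (∀ x y : B, BV (g x) (g y) = BB x y) ∧
      g ∘ₗ ι = f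

/-!
To realise a functional `φ` on a finite dimensional subspace `W ⊆ V` as `BV b ·`, adjoin to
`W` one new vector `e` with `[e, w] = φ w` (and `[w, e] = [e, e] = 0`). This is a finite
dimensional bilinear extension of `W`, so finite injectivity embeds it into `V` over `W`, and
the image of `e` is the required `b`. Linearly independent vectors span such a `W` on which
any values can be prescribed by a functional.
-/

section AdjoinFunctional

variable {K : Type*} [Field K] {A : Type*} [AddCommGroup A] [Module K A]

def adjoinFunctional (BA : A →ₗ[K] A →ₗ[K] K) (φ : A →ₗ[K] K) :
    A × K →ₗ[K] A × K →ₗ[K] K :=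
  BA.compl₁₂ (LinearMap.fst K A K) (LinearMap.fst K A K) +
    (LinearMap.mul K K).compl₁₂ (LinearMap.snd K A K) (φ ∘ₗ LinearMap.fst K A K)

@[simp]
theorem adjoinFunctional_apply (BA : A →ₗ[K] A →ₗ[K] K) (φ : A →ₗ[K] K) (x y : A × K) :
    adjoinFunctional BA φ x y = BA x.1 y.1 + x.2 * φ y.1 :=
  rfl

theorem adjoinFunctional_inl_inl (BA : A →ₗ[K] A →ₗ[K] K) (φ : A →ₗ[K] K) (x y : A) :
    adjoinFunctional BA φ (LinearMap.inl K A K x) (LinearMap.inl K A K y) = BA x y := by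
  simp

theorem adjoinFunctional_inr_inl (BA : A →ₗ[K] A →ₗ[K] K) (φ : A →ₗ[K] K) (x : A) :
    adjoinFunctional BA φ (LinearMap.inr K A K 1) (LinearMap.inl K A K x) = φ x := by
  simp

end AdjoinFunctional

namespace FinitelyInjective

variable {K : Type u} [Field K] {V : Type u} [AddCommGroup V] [Module K V]
  {BV : V →ₗ[K] V →ₗ[K] K}

theorem exists_forall_eq_of_finiteDimensional (hV : FinitelyInjective K V BV)
    (W : Submodule K V) [FiniteDimensional K W] (φ : W →ₗ[K] K) :
    ∃ b : V, ∀ w : W, BV b w = φ w := by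
  obtain ⟨g, -, hg, hgW⟩ := hV W (W × K) (BV.compl₁₂ W.subtype W.subtype)
    (adjoinFunctional _ φ) inferInstance inferInstance (LinearMap.inl K W K)
    LinearMap.inl_injective (adjoinFunctional_inl_inl _ φ) W.subtype W.injective_subtype
    (fun _ _ => rfl)
  refine ⟨g (LinearMap.inr K W K 1), fun w => ?_⟩
  have hw : (w : V) = g (LinearMap.inl K W K w) := (LinearMap.congr_fun hgW w).symm
  rw [hw, hg, adjoinFunctional_inr_inl]

theorem exists_forall_eq_of_linearIndependent (hV : FinitelyInjective K V BV)
    {ι : Type*} [Finite ι] {a : ι → V} (ha : LinearIndependent K a) (lam : ι → K) :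
    ∃ b : V, ∀ i, BV b (a i) = lam i := by
  have := FiniteDimensional.span_of_finite K (Set.finite_range a)
  obtain ⟨b, hb⟩ := hV.exists_forall_eq_of_finiteDimensional _ ((Module.Basis.span ha).constr K lam)
  refine ⟨b, fun i => ?_⟩
  have hi := hb (Module.Basis.span ha i)
  rwa [Module.Basis.constr_basis, Module.Basis.span_apply] at hi

theorem exists_ne_zero (hV : FinitelyInjective K V BV) {x : V} (hx : x ≠ 0) :
    ∃ b : V, BV b x ≠ 0 := by
  obtain ⟨b, hb⟩ := hV.exists_forall_eq_of_linearIndependent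
    (linearIndependent_unique_iff.mpr hx : LinearIndependent K fun _ : Unit => x) 1
  exact ⟨b, by simp [hb ()]⟩

end FinitelyInjective

/-- In a finitely injective bilinear space, any prescribed bilinear products against a
finite linearly independent family can be realised; in particular no nonzero vector is
orthogonal to all of `V`. -/
theorem finitelyInjective_realises_values
    {K : Type u} [Field K] {V : Type u} [AddCommGroup V] [Module K V]
    (BV : V →ₗ[K] V →ₗ[K] K) (hV : FinitelyInjective K V BV) :
    (∀ (n : ℕ) (a : Fin (n + 1) → V), LinearIndependent K a →
      ∀ lam : Fin (n + 1) → K, ∃ b : V, ∀ i : Fin (n + 1), BV b (a i) = lam i) ∧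
    (∀ x : V, x ≠ 0 → ∃ b : V, BV b x ≠ 0) :=
  ⟨fun _ _ ha lam => hV.exists_forall_eq_of_linearIndependent ha lam,
    fun _ hx => hV.exists_ne_zero hx⟩
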